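/- arXiv:2205.05713 — 2 statements merged into one kernel-verified Lean document; each statement's English description precedes it below -/
import Mathlib

section
/- Let T ∈ A⊗B⊗C be concise. If (X,Y,Z) and (X',Y',Z') are both compatible with T, then XX' = X'X, YY' = Y'Y, and ZZ' = Z'Z. -/
open TensorProduct

noncomputable section

namespace Paper

variable {A B C : Type*} [AddCommGroup A] [Module ℂ A]
  [AddCommGroup B] [Module ℂ B] [AddCommGroup C] [Module ℂ C]

/-- Action of `X ∈ End(A)` on the `A`-factor: `X ∘_A T = (X ⊗ Id_B ⊗ Id_C)(T)`. -/
def actA (X : Module.End ℂ A) : A ⊗[ℂ] (B ⊗[ℂ] C) →ₗ[ℂ] A ⊗[ℂ] (B ⊗[ℂ] C) :=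
  TensorProduct.map X LinearMap.id

/-- Action of `Y ∈ End(B)` on the `B`-factor. -/
def actB (Y : Module.End ℂ B) : A ⊗[ℂ] (B ⊗[ℂ] C) →ₗ[ℂ] A ⊗[ℂ] (B ⊗[ℂ] C) :=
  TensorProduct.map LinearMap.id (TensorProduct.map Y LinearMap.id)

/-- Action of `Z ∈ End(C)` on the `C`-factor. -/
def actC (Z : Module.End ℂ C) : A ⊗[ℂ] (B ⊗[ℂ] C) →ₗ[ℂ] A ⊗[ℂ] (B ⊗[ℂ] C) :=
  TensorProduct.map LinearMap.id (TensorProduct.map LinearMap.id Z)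

/-- Contraction of the `A`-factor against `α ∈ A*`: `T ↦ T(α) ∈ B ⊗ C`. -/
def contrA (α : Module.Dual ℂ A) : A ⊗[ℂ] (B ⊗[ℂ] C) →ₗ[ℂ] B ⊗[ℂ] C :=
  (TensorProduct.lid ℂ (B ⊗[ℂ] C)).toLinearMap ∘ₗ TensorProduct.map α LinearMap.id

/-- Contraction of the `B`-factor against `β ∈ B*`: `T ↦ T(β) ∈ A ⊗ C`. -/
def contrB (β : Module.Dual ℂ B) : A ⊗[ℂ] (B ⊗[ℂ] C) →ₗ[ℂ] A ⊗[ℂ] C :=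
  TensorProduct.map LinearMap.id
    ((TensorProduct.lid ℂ C).toLinearMap ∘ₗ TensorProduct.map β LinearMap.id)

/-- Contraction of the `C`-factor against `γ ∈ C*`: `T ↦ T(γ) ∈ A ⊗ B`. -/
def contrC (γ : Module.Dual ℂ C) : A ⊗[ℂ] (B ⊗[ℂ] C) →ₗ[ℂ] A ⊗[ℂ] B :=
  TensorProduct.map LinearMap.id
    ((TensorProduct.rid ℂ B).toLinearMap ∘ₗ TensorProduct.map LinearMap.id γ)

/-- A tensor is concise if all three flattening maps are injective. -/
def Concise (T : A ⊗[ℂ] (B ⊗[ℂ] C)) : Prop :=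
  Function.Injective (fun α : Module.Dual ℂ A => contrA α T) ∧
  Function.Injective (fun β : Module.Dual ℂ B => contrB β T) ∧
  Function.Injective (fun γ : Module.Dual ℂ C => contrC γ T)

/-- View an element of `M ⊗ N` as a linear map `M* → N`. -/
def toHom {M N : Type*} [AddCommGroup M] [Module ℂ M] [AddCommGroup N] [Module ℂ N] :
    M ⊗[ℂ] N →ₗ[ℂ] (Module.Dual ℂ M →ₗ[ℂ] N) :=
  (dualTensorHom ℂ (Module.Dual ℂ M) N).comp
    (TensorProduct.map (Module.Dual.eval ℂ M) LinearMap.id)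

/-- A triple `(X,Y,Z)` is compatible with `T` if `X∘_A T = Y∘_B T = Z∘_C T`. -/
def Compat (T : A ⊗[ℂ] (B ⊗[ℂ] C))
    (p : Module.End ℂ A × Module.End ℂ B × Module.End ℂ C) : Prop :=
  actA p.1 T = actB p.2.1 T ∧ actB p.2.1 T = actC p.2.2 T

/-- The subspace `T(A*) ⊗ A ⊆ A ⊗ B ⊗ C`. -/
def spanA (T : A ⊗[ℂ] (B ⊗[ℂ] C)) : Submodule ℂ (A ⊗[ℂ] (B ⊗[ℂ] C)) :=
  Submodule.span ℂ {x | ∃ (a : A) (α : Module.Dual ℂ A), x = a ⊗ₜ[ℂ] contrA α T}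

/-- The subspace `T(B*) ⊗ B ⊆ A ⊗ B ⊗ C` (factors in the correct positions). -/
def spanB (T : A ⊗[ℂ] (B ⊗[ℂ] C)) : Submodule ℂ (A ⊗[ℂ] (B ⊗[ℂ] C)) :=
  Submodule.span ℂ {x | ∃ (b : B) (β : Module.Dual ℂ B),
    x = (TensorProduct.leftComm ℂ B A C) (b ⊗ₜ[ℂ] contrB β T)}

/-- The subspace `T(C*) ⊗ C ⊆ A ⊗ B ⊗ C` (factors in the correct positions). -/
def spanC (T : A ⊗[ℂ] (B ⊗[ℂ] C)) : Submodule ℂ (A ⊗[ℂ] (B ⊗[ℂ] C)) :=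
  Submodule.span ℂ {x | ∃ (c : C) (γ : Module.Dual ℂ C),
    x = (TensorProduct.congr (LinearEquiv.refl ℂ A) (TensorProduct.comm ℂ C B))
      ((TensorProduct.leftComm ℂ C A B) (c ⊗ₜ[ℂ] contrC γ T))}

/-- The triple intersection `(T(A*)⊗A) ∩ (T(B*)⊗B) ∩ (T(C*)⊗C)`. -/
def tripleInt (T : A ⊗[ℂ] (B ⊗[ℂ] C)) : Submodule ℂ (A ⊗[ℂ] (B ⊗[ℂ] C)) :=
  spanA T ⊓ spanB T ⊓ spanC T

end Paper

namespace Paper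

section Aux

variable {A B C : Type*} [AddCommGroup A] [Module ℂ A]
  [AddCommGroup B] [Module ℂ B] [AddCommGroup C] [Module ℂ C]

lemma actA_actB_comm (X : Module.End ℂ A) (Y : Module.End ℂ B) (t : A ⊗[ℂ] (B ⊗[ℂ] C)) :
    actA X (actB Y t) = actB Y (actA X t) := by
  have h : (actA (B := B) (C := C) X) ∘ₗ actB Y = actB Y ∘ₗ actA X := by
    simp only [actA, actB, ← TensorProduct.map_comp, LinearMap.id_comp, LinearMap.comp_id]
  exact LinearMap.congr_fun h t

lemma actA_actC_comm (X : Module.End ℂ A) (Z : Module.End ℂ C) (t : A ⊗[ℂ] (B ⊗[ℂ] C)) :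
    actA X (actC Z t) = actC Z (actA X t) := by
  have h : (actA (B := B) (C := C) X) ∘ₗ actC Z = actC Z ∘ₗ actA X := by
    simp only [actA, actC, ← TensorProduct.map_comp, LinearMap.id_comp, LinearMap.comp_id]
  exact LinearMap.congr_fun h t

lemma actB_actC_comm (Y : Module.End ℂ B) (Z : Module.End ℂ C) (t : A ⊗[ℂ] (B ⊗[ℂ] C)) :
    actB Y (actC Z t) = actC Z (actB Y t) := by
  have h : (actB (A := A) (C := C) Y) ∘ₗ actC Z = actC Z ∘ₗ actB Y := by
    simp only [actB, actC, ← TensorProduct.map_comp, LinearMap.id_comp, LinearMap.comp_id]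
  exact LinearMap.congr_fun h t

lemma actA_mul (X X' : Module.End ℂ A) (t : A ⊗[ℂ] (B ⊗[ℂ] C)) :
    actA (X * X') t = actA X (actA X' t) := by
  have h : (actA (B := B) (C := C) (X * X')) = actA X ∘ₗ actA X' := by
    simp only [actA, Module.End.mul_eq_comp, ← TensorProduct.map_comp, LinearMap.id_comp]
  exact LinearMap.congr_fun h t

lemma actB_mul (Y Y' : Module.End ℂ B) (t : A ⊗[ℂ] (B ⊗[ℂ] C)) :
    actB (Y * Y') t = actB Y (actB Y' t) := by
  have h : (actB (A := A) (C := C) (Y * Y')) = actB Y ∘ₗ actB Y' := by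
    simp only [actB, Module.End.mul_eq_comp, ← TensorProduct.map_comp, LinearMap.id_comp,
      LinearMap.comp_id]
  exact LinearMap.congr_fun h t

lemma actC_mul (Z Z' : Module.End ℂ C) (t : A ⊗[ℂ] (B ⊗[ℂ] C)) :
    actC (Z * Z') t = actC Z (actC Z' t) := by
  have h : (actC (A := A) (B := B) (Z * Z')) = actC Z ∘ₗ actC Z' := by
    simp only [actC, Module.End.mul_eq_comp, ← TensorProduct.map_comp, LinearMap.id_comp,
      LinearMap.comp_id]
  exact LinearMap.congr_fun h t

lemma contrA_actA (α : Module.Dual ℂ A) (X : Module.End ℂ A) (t : A ⊗[ℂ] (B ⊗[ℂ] C)) :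
    contrA α (actA X t) = contrA (α ∘ₗ X) t := by
  have h : (contrA (B := B) (C := C) α) ∘ₗ actA X = contrA (α ∘ₗ X) := by
    apply TensorProduct.ext'
    intro a bc
    simp [contrA, actA]
  exact LinearMap.congr_fun h t

lemma contrB_actB (β : Module.Dual ℂ B) (Y : Module.End ℂ B) (t : A ⊗[ℂ] (B ⊗[ℂ] C)) :
    contrB β (actB Y t) = contrB (β ∘ₗ Y) t := by
  have h : (contrB (A := A) (C := C) β) ∘ₗ actB Y = contrB (β ∘ₗ Y) := by
    apply TensorProduct.ext'
    intro a bc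
    induction bc using TensorProduct.induction_on with
    | zero => simp
    | tmul b c => simp [contrB, actB]
    | add x y hx hy => simp only [tmul_add, map_add, hx, hy]
  exact LinearMap.congr_fun h t

lemma contrC_actC (γ : Module.Dual ℂ C) (Z : Module.End ℂ C) (t : A ⊗[ℂ] (B ⊗[ℂ] C)) :
    contrC γ (actC Z t) = contrC (γ ∘ₗ Z) t := by
  have h : (contrC (A := A) (B := B) γ) ∘ₗ actC Z = contrC (γ ∘ₗ Z) := by
    apply TensorProduct.ext'
    intro a bc
    induction bc using TensorProduct.induction_on with
    | zero => simp
    | tmul b c => simp [contrC, actC]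
    | add x y hx hy => simp only [tmul_add, map_add, hx, hy]
  exact LinearMap.congr_fun h t

variable [FiniteDimensional ℂ A] [FiniteDimensional ℂ B] [FiniteDimensional ℂ C]

lemma eq_of_dual_comp {M : Type*} [AddCommGroup M] [Module ℂ M] [FiniteDimensional ℂ M]
    {f g : Module.End ℂ M} (h : ∀ φ : Module.Dual ℂ M, φ ∘ₗ f = φ ∘ₗ g) : f = g := by
  ext m
  rw [← sub_eq_zero, ← Module.forall_dual_apply_eq_zero_iff (R := ℂ)]
  intro φ
  have := LinearMap.congr_fun (h φ) m
  simpa [sub_eq_zero] using this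

lemma injA {T : A ⊗[ℂ] (B ⊗[ℂ] C)} (hT : Concise T) {X X' : Module.End ℂ A}
    (h : actA X T = actA X' T) : X = X' := by
  apply eq_of_dual_comp
  intro φ
  apply hT.1
  simp only [← contrA_actA, h]

lemma injB {T : A ⊗[ℂ] (B ⊗[ℂ] C)} (hT : Concise T) {Y Y' : Module.End ℂ B}
    (h : actB Y T = actB Y' T) : Y = Y' := by
  apply eq_of_dual_comp
  intro φ
  apply hT.2.1
  simp only [← contrB_actB, h]

lemma injC {T : A ⊗[ℂ] (B ⊗[ℂ] C)} (hT : Concise T) {Z Z' : Module.End ℂ C}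
    (h : actC Z T = actC Z' T) : Z = Z' := by
  apply eq_of_dual_comp
  intro φ
  apply hT.2.2
  simp only [← contrC_actC, h]

/-- Key chain: `actA (X*X') T = actC (Z*Z') T` for compatible triples `(X,Y,Z)`, `(X',Y',Z')`. -/
lemma chain1 {T : A ⊗[ℂ] (B ⊗[ℂ] C)}
    {p q : Module.End ℂ A × Module.End ℂ B × Module.End ℂ C}
    (hp : Compat T p) (hq : Compat T q) :
    actA (p.1 * q.1) T = actC (p.2.2 * q.2.2) T := by
  rw [actA_mul, hq.1, actA_actB_comm, hp.1.trans hp.2, actB_actC_comm, hq.2, ← actC_mul]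

/-- Key chain: `actA (X*X') T = actB (Y*Y') T` for compatible triples. -/
lemma chain2 {T : A ⊗[ℂ] (B ⊗[ℂ] C)}
    {p q : Module.End ℂ A × Module.End ℂ B × Module.End ℂ C}
    (hp : Compat T p) (hq : Compat T q) :
    actA (p.1 * q.1) T = actB (p.2.1 * q.2.1) T := by
  rw [actA_mul, hq.1.trans hq.2, actA_actC_comm, hp.1, ← actB_actC_comm, ← hq.2, ← actB_mul]

/-- Key chain: `actB (Y*Y') T = actC (Z'*Z) T` for compatible triples. -/
lemma chain3 {T : A ⊗[ℂ] (B ⊗[ℂ] C)}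
    {p q : Module.End ℂ A × Module.End ℂ B × Module.End ℂ C}
    (hp : Compat T p) (hq : Compat T q) :
    actB (p.2.1 * q.2.1) T = actC (q.2.2 * p.2.2) T := by
  rw [actB_mul, hq.2, actB_actC_comm, hp.2, ← actC_mul]

end Aux

end Paper

open Paper in
/-- for a concise tensor, the components of compatible triples commute. -/
theorem stmt4 {A B C : Type*} [AddCommGroup A] [Module ℂ A] [AddCommGroup B] [Module ℂ B]
    [AddCommGroup C] [Module ℂ C] [FiniteDimensional ℂ A] [FiniteDimensional ℂ B]
    [FiniteDimensional ℂ C] (T : A ⊗[ℂ] (B ⊗[ℂ] C)) (hT : Concise T)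
    (p q : Module.End ℂ A × Module.End ℂ B × Module.End ℂ C)
    (hp : Compat T p) (hq : Compat T q) :
    p.1 * q.1 = q.1 * p.1 ∧ p.2.1 * q.2.1 = q.2.1 * p.2.1 ∧
      p.2.2 * q.2.2 = q.2.2 * p.2.2 := by
  have hZ : p.2.2 * q.2.2 = q.2.2 * p.2.2 :=
    injC hT ((chain1 hp hq).symm.trans ((chain2 hp hq).trans (chain3 hp hq)))
  have hY : p.2.1 * q.2.1 = q.2.1 * p.2.1 :=
    injB hT ((chain3 hp hq).trans (by rw [← hZ]; exact (chain3 hq hp).symm))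
  have hX : p.1 * q.1 = q.1 * p.1 :=
    injA hT ((chain1 hp hq).trans (by rw [hZ]; exact (chain1 hq hp).symm))
  exact ⟨hX, hY, hZ⟩
end
end

section
/- Let T ∈ A⊗B⊗C and let 𝒜 be a commutative unital subalgebra of End(A)×End(B)×End(C). Then 𝒜 is contained in the 111-algebra of T if and only if the bilinear map A*×B* → C, (α,β) ↦ T(α,β), is 𝒜-bilinear (T(rα,β) = T(α,rβ) for all r ∈ 𝒜) and the induced map A*⊗_𝒜 B* → C is a homomorphism of 𝒜-modules. -/
open TensorProduct

noncomputable section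

section Aux12

variable {A B C : Type*} [AddCommGroup A] [Module ℂ A]
  [AddCommGroup B] [Module ℂ B] [AddCommGroup C] [Module ℂ C]

open Paper

lemma toHom_tmul' {M N : Type*} [AddCommGroup M] [Module ℂ M] [AddCommGroup N] [Module ℂ N]
    (m : M) (n : N) (f : Module.Dual ℂ M) : toHom (m ⊗ₜ[ℂ] n) f = f m • n := by
  simp [toHom]

lemma toHom_inj' {M N : Type*} [AddCommGroup M] [Module ℂ M] [AddCommGroup N] [Module ℂ N]
    [FiniteDimensional ℂ M] :
    Function.Injective (toHom : M ⊗[ℂ] N →ₗ[ℂ] (Module.Dual ℂ M →ₗ[ℂ] N)) := by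
  have h1 : Function.Injective (dualTensorHom ℂ (Module.Dual ℂ M) N) := by
    have := (dualTensorHomEquiv ℂ (Module.Dual ℂ M) N).injective
    exact fun x y hxy => this hxy
  have h2 : Function.Injective
      (TensorProduct.map (Module.Dual.eval ℂ M) (LinearMap.id : N →ₗ[ℂ] N)) := by
    have heq : TensorProduct.map (Module.Dual.eval ℂ M) (LinearMap.id : N →ₗ[ℂ] N)
        = (TensorProduct.congr (Module.evalEquiv ℂ M) (LinearEquiv.refl ℂ N)).toLinearMap := by
      ext m n
      simp [TensorProduct.congr, Module.evalEquiv]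
    rw [heq]
    exact (TensorProduct.congr (Module.evalEquiv ℂ M) (LinearEquiv.refl ℂ N)).injective
  intro x y hxy
  exact h2 (h1 hxy)

lemma contrA_eq_toHom' (α : Module.Dual ℂ A) (T : A ⊗[ℂ] (B ⊗[ℂ] C)) :
    contrA α T = toHom T α := by
  induction T using TensorProduct.induction_on with
  | zero => simp
  | tmul a m => simp [contrA, toHom_tmul']
  | add x y hx hy => simp [hx, hy]

lemma contrA_actA' (X : Module.End ℂ A) (α : Module.Dual ℂ A) (T : A ⊗[ℂ] (B ⊗[ℂ] C)) :
    contrA α (actA X T) = contrA (X.dualMap α) T := by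
  induction T using TensorProduct.induction_on with
  | zero => simp
  | tmul a m => simp [contrA, actA]
  | add x y hx hy => simp [actA, contrA] at hx hy ⊢; simp [hx, hy]

lemma contrA_actB' (Y : Module.End ℂ B) (α : Module.Dual ℂ A) (T : A ⊗[ℂ] (B ⊗[ℂ] C)) :
    contrA α (actB Y T) = TensorProduct.map Y LinearMap.id (contrA α T) := by
  induction T using TensorProduct.induction_on with
  | zero => simp
  | tmul a m => simp [contrA, actB]
  | add x y hx hy => simp [actB, contrA] at hx hy ⊢; simp [hx, hy]

lemma contrA_actC' (Z : Module.End ℂ C) (α : Module.Dual ℂ A) (T : A ⊗[ℂ] (B ⊗[ℂ] C)) :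
    contrA α (actC Z T) = TensorProduct.map LinearMap.id Z (contrA α T) := by
  induction T using TensorProduct.induction_on with
  | zero => simp
  | tmul a m => simp [contrA, actC]
  | add x y hx hy => simp [actC, contrA] at hx hy ⊢; simp [hx, hy]

lemma toHom_mapY' (Y : Module.End ℂ B) (S : B ⊗[ℂ] C) (β : Module.Dual ℂ B) :
    toHom (TensorProduct.map Y LinearMap.id S) β = toHom S (Y.dualMap β) := by
  induction S using TensorProduct.induction_on with
  | zero => simp
  | tmul b c => simp [toHom_tmul']
  | add x y hx hy => simp [hx, hy]

lemma toHom_mapZ' (Z : Module.End ℂ C) (S : B ⊗[ℂ] C) (β : Module.Dual ℂ B) :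
    toHom (TensorProduct.map LinearMap.id Z S) β = Z (toHom S β) := by
  induction S using TensorProduct.induction_on with
  | zero => simp
  | tmul b c => simp [toHom_tmul']
  | add x y hx hy => simp [hx, hy]

lemma eq_of_pair' [FiniteDimensional ℂ A] [FiniteDimensional ℂ B]
    (S S' : A ⊗[ℂ] (B ⊗[ℂ] C))
    (h : ∀ (α : Module.Dual ℂ A) (β : Module.Dual ℂ B),
      toHom (contrA α S) β = toHom (contrA α S') β) : S = S' := by
  apply toHom_inj'
  ext α
  rw [← contrA_eq_toHom', ← contrA_eq_toHom']
  apply toHom_inj'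
  ext β
  exact h α β

end Aux12

open Paper in
/-- a commutative unital subalgebra `𝒜 ⊆ End(A)×End(B)×End(C)` is contained in
the 111-algebra of `T` iff the bilinear map `(α,β) ↦ T(α,β)` is `𝒜`-bilinear
(`T(rα,β) = T(α,rβ)`, so that it factors through `A*⊗_𝒜 B*`) and the induced map
`A*⊗_𝒜 B* → C` is a homomorphism of `𝒜`-modules (`T(rα,β) = r·T(α,β)`). -/
theorem stmt12 {A B C : Type*} [AddCommGroup A] [Module ℂ A] [AddCommGroup B] [Module ℂ B]
    [AddCommGroup C] [Module ℂ C] [FiniteDimensional ℂ A] [FiniteDimensional ℂ B]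
    [FiniteDimensional ℂ C] (T : A ⊗[ℂ] (B ⊗[ℂ] C))
    (𝒜 : Subalgebra ℂ (Module.End ℂ A × Module.End ℂ B × Module.End ℂ C))
    (hcomm : ∀ p ∈ 𝒜, ∀ q ∈ 𝒜, p * q = q * p) :
    (∀ p ∈ 𝒜, Compat T p) ↔
      ((∀ p ∈ 𝒜, ∀ (α : Module.Dual ℂ A) (β : Module.Dual ℂ B),
          toHom (contrA (p.1.dualMap α) T) β = toHom (contrA α T) (p.2.1.dualMap β)) ∧
       (∀ p ∈ 𝒜, ∀ (α : Module.Dual ℂ A) (β : Module.Dual ℂ B),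
          toHom (contrA (p.1.dualMap α) T) β = p.2.2 (toHom (contrA α T) β))) := by
  constructor
  · intro h
    refine ⟨?_, ?_⟩ <;> intro p hp α β
    · obtain ⟨h1, _⟩ := h p hp
      rw [← contrA_actA' p.1 α T, h1, contrA_actB', toHom_mapY']
    · obtain ⟨h1, h2⟩ := h p hp
      rw [← contrA_actA' p.1 α T, h1, h2, contrA_actC', toHom_mapZ']
  · rintro ⟨h1, h2⟩ p hp
    constructor
    · apply eq_of_pair'
      intro α β
      rw [contrA_actA', contrA_actB', toHom_mapY']
      exact h1 p hp α β
    · apply eq_of_pair'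
      intro α β
      rw [contrA_actB', contrA_actC', toHom_mapY', toHom_mapZ']
      rw [← h1 p hp α β]
      exact h2 p hp α β
end
end
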